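/- arXiv:2504.19942 — 3 statements merged into one kernel-verified Lean document; each statement's English description precedes it below -/
import Mathlib

section
/- For all real numbers Q and λ with 0 < Q ≤ 1 and 0 ≤ λ ≤ 1/2, we have exp(-(Q - λQ³)^(-2)) ≤ (1 - λ)·exp(-Q^(-2)). -/
/-!
Put `t = λ Q²`, so that `Q - λ Q³ = Q (1 - t)`. From `(1 - t)⁻² ≥ 1 + 2t` one gets
`(Q - λ Q³)⁻² ≥ Q⁻² + 2λ`, hence the left side is at most `exp (-2λ) · exp (-Q⁻²)`,
and `exp (-2λ) ≤ 1 - λ` on `[0, 1/2]`.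
-/

open Real

lemma one_add_two_mul_le_inv_one_sub_sq {t : ℝ} (ht : t < 1) :
    1 + 2 * t ≤ ((1 - t) ^ 2)⁻¹ := by
  have hpos : 0 < (1 - t) ^ 2 := by nlinarith
  rw [← one_div, le_div_iff₀ hpos]
  -- `(1 + 2t)(1 - t)² = 1 - t² (3 - 2t)`
  nlinarith [mul_nonneg (sq_nonneg t) (by linarith : (0 : ℝ) ≤ 3 - 2 * t)]

lemma inv_sq_add_two_mul_le_inv_sq_sub {Q lam : ℝ} (hQ : 0 < Q) (hlQ : lam * Q ^ 2 < 1) :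
    (Q ^ 2)⁻¹ + 2 * lam ≤ ((Q - lam * Q ^ 3) ^ 2)⁻¹ := by
  have hQ2 : Q ^ 2 ≠ 0 := by positivity
  calc (Q ^ 2)⁻¹ + 2 * lam = (Q ^ 2)⁻¹ * (1 + 2 * (lam * Q ^ 2)) := by
        field_simp
    _ ≤ (Q ^ 2)⁻¹ * ((1 - lam * Q ^ 2) ^ 2)⁻¹ := by
        gcongr
        exact one_add_two_mul_le_inv_one_sub_sq hlQ
    _ = ((Q - lam * Q ^ 3) ^ 2)⁻¹ := by
        rw [← mul_inv, ← mul_pow]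
        ring

lemma exp_neg_two_mul_le_one_sub {x : ℝ} (hx0 : 0 ≤ x) (hx1 : x ≤ 1 / 2) :
    exp (-(2 * x)) ≤ 1 - x := by
  have hexp : 1 + 2 * x ≤ exp (2 * x) := by linarith [add_one_le_exp (2 * x)]
  rw [exp_neg, inv_le_iff_one_le_mul₀ (exp_pos _)]
  -- `(1 + 2x)(1 - x) = 1 + x (1 - 2x) ≥ 1`
  nlinarith [mul_nonneg hx0 (by linarith : (0 : ℝ) ≤ 1 - 2 * x)]

theorem stmt_0 (Q lam : ℝ) (hQ0 : 0 < Q) (hQ1 : Q ≤ 1)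
    (hl0 : 0 ≤ lam) (hl1 : lam ≤ 1/2) :
    Real.exp (-((Q - lam * Q^3)^2)⁻¹) ≤ (1 - lam) * Real.exp (-(Q^2)⁻¹) := by
  have hlQ : lam * Q ^ 2 < 1 := by nlinarith
  calc exp (-((Q - lam * Q ^ 3) ^ 2)⁻¹)
      ≤ exp (-(2 * lam) + -(Q ^ 2)⁻¹) := by
        gcongr
        linarith [inv_sq_add_two_mul_le_inv_sq_sub hQ0 hlQ]
    _ = exp (-(2 * lam)) * exp (-(Q ^ 2)⁻¹) := exp_add _ _
    _ ≤ (1 - lam) * exp (-(Q ^ 2)⁻¹) := by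
        gcongr
        exact exp_neg_two_mul_le_one_sub hl0 hl1
end

section
/- Let G = (V,E) be a connected finite graph and m : V → [0,1] with ∑_{v∈V} m(v) = 1. Define Q := ∑_{v∈V} m(v)² and 𝓔 := ∑_{{u,v}∈E} (m(u) - m(v))². If Q ≥ 2/|V|, then 𝓔 ≥ Q³/8. -/
open Finset SimpleGraph

private lemma list_cauchy (l : List (ℝ × ℝ)) :
    (l.map (fun p => p.1 * p.2)).sum ^ 2 ≤
      (l.map (fun p => p.1 ^ 2)).sum * (l.map (fun p => p.2 ^ 2)).sum := by
  induction l with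
  | nil => simp
  | cons p l ih =>
    simp only [List.map_cons, List.sum_cons]
    have hS : (0:ℝ) ≤ (l.map (fun p => p.1 ^ 2)).sum :=
      List.sum_nonneg (by rintro x hx; simp only [List.mem_map] at hx
                          obtain ⟨q, _, rfl⟩ := hx; positivity)
    have hT : (0:ℝ) ≤ (l.map (fun p => p.2 ^ 2)).sum :=
      List.sum_nonneg (by rintro x hx; simp only [List.mem_map] at hx
                          obtain ⟨q, _, rfl⟩ := hx; positivity)
    set D := (l.map (fun p => p.1 * p.2)).sum
    set S := (l.map (fun p => p.1 ^ 2)).sum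
    set T := (l.map (fun p => p.2 ^ 2)).sum
    rcases eq_or_lt_of_le hS with h | h
    · have hD0 : D = 0 := by nlinarith [sq_nonneg D]
      rw [hD0, ← h]
      nlinarith [mul_nonneg (sq_nonneg p.1) hT]
    · nlinarith [h, sq_nonneg (S * p.2 - D * p.1),
        mul_nonneg (sub_nonneg.2 ih) (sq_nonneg p.1),
        mul_nonneg (sub_nonneg.2 ih) hS]

private lemma walk_telescope {V : Type*} {G : SimpleGraph V} (m : V → ℝ) :
    ∀ {a b : V} (w : G.Walk a b),
      m a ^ 2 - m b ^ 2 ≤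
        2 * ((w.darts.map (fun d => (m d.fst - m d.snd) * m d.fst)).sum) := by
  intro a b w
  induction w with
  | nil => simp
  | @cons u v b h w ih =>
    simp only [Walk.darts_cons, List.map_cons, List.sum_cons]
    nlinarith [sq_nonneg (m u - m v)]

set_option maxHeartbeats 1000000 in
theorem stmt_3 {V : Type*} [Fintype V] [DecidableEq V]
    (G : SimpleGraph V) [DecidableRel G.Adj] (hconn : G.Connected)
    (m : V → ℝ) (hm0 : ∀ v, 0 ≤ m v) (hm1 : ∀ v, m v ≤ 1)
    (hsum : ∑ v, m v = 1)
    (hQ : 2 / (Fintype.card V : ℝ) ≤ ∑ v, (m v)^2) :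
    (∑ v, (m v)^2)^3 / 8 ≤
      ∑ e ∈ G.edgeFinset,
        Sym2.lift ⟨fun u v => (m u - m v)^2, fun u v => by ring⟩ e := by
  classical
  set Q : ℝ := ∑ v, (m v)^2 with hQdef
  set f : Sym2 V → ℝ := Sym2.lift ⟨fun u v => (m u - m v)^2, fun u v => by ring⟩ with hf
  set E : ℝ := ∑ e ∈ G.edgeFinset, f e with hE
  have hne : Nonempty V := hconn.nonempty
  have hn : 0 < (Fintype.card V : ℝ) := by
    exact_mod_cast Fintype.card_pos
  have hQpos : 0 < Q := lt_of_lt_of_le (by positivity) hQ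
  -- max vertex
  obtain ⟨a, -, ha⟩ := Finset.exists_max_image (univ : Finset V) m ⟨Classical.arbitrary V, mem_univ _⟩
  have hmaQ : Q ≤ m a := by
    calc Q = ∑ v, m v * m v := by simp [hQdef, sq]
    _ ≤ ∑ v, m v * m a := by
        apply Finset.sum_le_sum
        intro v hv
        exact mul_le_mul_of_nonneg_left (ha v (mem_univ v)) (hm0 v)
    _ = m a := by rw [← Finset.sum_mul, hsum, one_mul]
  -- min vertex
  obtain ⟨b, -, hb⟩ := Finset.exists_min_image (univ : Finset V) m ⟨Classical.arbitrary V, mem_univ _⟩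
  have hmb : m b ≤ Q / 2 := by
    have h1 : (Fintype.card V : ℝ) * m b ≤ 1 := by
      calc (Fintype.card V : ℝ) * m b = ∑ _v : V, m b := by
            simp [mul_comm]
      _ ≤ ∑ v, m v := Finset.sum_le_sum fun v _ => hb v (mem_univ v)
      _ = 1 := hsum
    have h2 : m b ≤ 1 / (Fintype.card V : ℝ) := by
      rw [le_div_iff₀ hn]; linarith [h1]
    have h3 : 1 / (Fintype.card V : ℝ) ≤ Q / 2 := by
      rw [div_le_div_iff₀ hn (by norm_num)]
      have := hQ
      rw [div_le_iff₀ hn] at this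
      linarith
    linarith
  -- path from a to b
  obtain ⟨w0⟩ := hconn.preconnected a b
  let p : G.Path a b := w0.toPath
  obtain ⟨w, hw⟩ := p
  -- quantities along the walk
  set D : ℝ := (w.darts.map (fun d => (m d.fst - m d.snd) * m d.fst)).sum with hD
  set S : ℝ := (w.darts.map (fun d => (m d.fst - m d.snd) ^ 2)).sum with hS
  set T : ℝ := (w.darts.map (fun d => m d.fst ^ 2)).sum with hT
  have htel : m a ^ 2 - m b ^ 2 ≤ 2 * D := walk_telescope m w
  have hcauchy : D ^ 2 ≤ S * T := by
    have := list_cauchy (w.darts.map (fun d => (m d.fst - m d.snd, m d.fst)))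
    simpa [List.map_map, Function.comp_def, hD, hS, hT] using this
  -- S ≤ E
  have hSE : S ≤ E := by
    have hmapedge : S = (w.edges.map f).sum := by
      rw [hS, Walk.edges, List.map_map]
      refine congrArg List.sum (List.map_congr_left fun d _ => ?_)
      obtain ⟨⟨u, v⟩, hd⟩ := d
      simp [hf, SimpleGraph.Dart.edge]
    have hnodup : w.edges.Nodup := hw.isTrail.edges_nodup
    have hfin : (w.edges.map f).sum = ∑ e ∈ w.edges.toFinset, f e :=
      (List.sum_toFinset f hnodup).symm
    rw [hmapedge, hfin, hE]
    apply Finset.sum_le_sum_of_subset_of_nonneg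
    · intro e he
      rw [List.mem_toFinset] at he
      rw [mem_edgeFinset]
      exact w.edges_subset_edgeSet he
    · intro e _ _
      induction e using Sym2.ind with
      | _ u v => simp [hf]; positivity
  -- T ≤ Q
  have hTQ : T ≤ Q := by
    have hmapv : T = ((w.support.dropLast).map (fun v => m v ^ 2)).sum := by
      rw [hT, ← w.map_fst_darts, List.map_map]; rfl
    have hnodup : (w.support.dropLast).Nodup :=
      hw.support_nodup.sublist (List.dropLast_sublist _)
    have hfin : ((w.support.dropLast).map (fun v => m v ^ 2)).sum
        = ∑ v ∈ (w.support.dropLast).toFinset, m v ^ 2 :=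
      (List.sum_toFinset _ hnodup).symm
    rw [hmapv, hfin, hQdef]
    apply Finset.sum_le_sum_of_subset_of_nonneg
    · intro v _; exact mem_univ v
    · intro v _ _; positivity
  have hSnn : 0 ≤ S := by
    apply List.sum_nonneg
    intro x hx
    simp only [List.mem_map] at hx
    obtain ⟨d, _, rfl⟩ := hx; positivity
  have hmb0 : 0 ≤ m b := hm0 b
  have hTnn : 0 ≤ T := by
    apply List.sum_nonneg
    intro x hx
    simp only [List.mem_map] at hx
    obtain ⟨d, _, rfl⟩ := hx; positivity
  -- final arithmetic
  have hEnn : 0 ≤ E := le_trans hSnn hSE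
  have hSTEQ : S * T ≤ E * Q := mul_le_mul hSE hTQ hTnn hEnn
  have hD2 : D ^ 2 ≤ E * Q := le_trans hcauchy hSTEQ
  have h2D : 3 * Q ^ 2 / 4 ≤ 2 * D := by
    have h1 : Q ^ 2 ≤ m a ^ 2 := by nlinarith
    have h2 : m b ^ 2 ≤ Q ^ 2 / 4 := by nlinarith
    linarith
  have hDnn : 0 ≤ D := by nlinarith [sq_nonneg Q]
  have hD' : 3 * Q ^ 2 / 8 ≤ D := by linarith
  have hDsq : (3 * Q ^ 2 / 8) ^ 2 ≤ D ^ 2 := by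
    have := mul_le_mul hD' hD' (by positivity) hDnn
    nlinarith [this]
  show Q ^ 3 / 8 ≤ E
  nlinarith [hD2, hDsq, hQpos, mul_pos hQpos hQpos]
end

section
/- Let G = (V,E) be a connected, infinite, locally finite graph and m : V → [0,1] a function with ∑_{v∈V} m(v) = 1 and finite support. Define Q := ∑_{v∈V} m(v)² and 𝓔 := ∑_{{u,v}∈E} (m(u) - m(v))². Then 𝓔 ≥ Q³/8. -/
/-! Since `∑ m = 1`, the maximum of `m` is at least `Q`, while the set `S` of vertices with
`m ≥ Q / 2` has at most `2 / Q` elements. As `V` is infinite and `G` connected, a path from a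
maximiser leaves `S` after at most `#S` edges, and along it `m` drops by at least `Q / 2`.
Cauchy–Schwarz along this path gives `𝓔 ≥ (Q / 2)² / #S ≥ Q³ / 8`. Local finiteness is what
makes the edge sum finite: otherwise `∑ᶠ` would take the junk value `0`. -/

open Set Finset

lemma Finset.sum_le_finsum_mem_of_subset {α M : Type*} [AddCommMonoid M] [PartialOrder M]
    [IsOrderedAddMonoid M] {f : α → M} {s : Set α} {t : Finset α} (ht : ↑t ⊆ s)
    (hs : (s ∩ Function.support f).Finite) (hf : ∀ x ∈ s, 0 ≤ f x) :
    ∑ x ∈ t, f x ≤ ∑ᶠ x ∈ s, f x := by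
  classical
  have hsub : ↑(hs.toFinset ∪ t) ⊆ s := by
    rw [Finset.coe_union, Finite.coe_toFinset]
    exact Set.union_subset Set.inter_subset_left ht
  rw [finsum_mem_eq_sum_of_subset f (by simp) hsub]
  exact Finset.sum_le_sum_of_subset_of_nonneg Finset.subset_union_right
    fun x hx _ => hf x (hsub hx)

lemma Finset.exists_sum_sq_le_mul_sum {ι : Type*} {s : Finset ι} {f : ι → ℝ} (hs : s.Nonempty)
    (hf : ∀ i ∈ s, 0 ≤ f i) : ∃ i ∈ s, ∑ j ∈ s, f j ^ 2 ≤ f i * ∑ j ∈ s, f j := by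
  obtain ⟨i, hi, hmax⟩ := s.exists_max_image f hs
  refine ⟨i, hi, ?_⟩
  rw [Finset.mul_sum]
  exact Finset.sum_le_sum fun j hj => by
    rw [sq, mul_comm]
    exact mul_le_mul_of_nonneg_right (hmax j hj) (hf j hj)

lemma Finset.card_filter_le_mul_le_sum {ι : Type*} (s : Finset ι) {f : ι → ℝ}
    (hf : ∀ i ∈ s, 0 ≤ f i) (c : ℝ) : #(s.filter (c ≤ f ·)) * c ≤ ∑ i ∈ s, f i := by
  calc (#(s.filter (c ≤ f ·)) : ℝ) * c ≤ ∑ i ∈ s.filter (c ≤ f ·), f i := by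
        simpa using Finset.card_nsmul_le_sum _ f c fun i hi => (Finset.mem_filter.mp hi).2
    _ ≤ ∑ i ∈ s, f i :=
        Finset.sum_le_sum_of_subset_of_nonneg (Finset.filter_subset _ _) fun i hi _ => hf i hi

lemma add_sq_le_add_one_mul {a b n P : ℝ} (hn : 0 ≤ n) (hP : 0 ≤ P) (h : b ^ 2 ≤ n * P) :
    (a + b) ^ 2 ≤ (n + 1) * (a ^ 2 + P) := by
  rcases hn.eq_or_lt with rfl | hn
  · have hb : b = 0 := by nlinarith [sq_nonneg b]
    simp [hb, hP]
  · refine le_of_mul_le_mul_left ?_ hn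
    nlinarith [sq_nonneg (n * a - b)]

namespace SimpleGraph

variable {V : Type*} {G : SimpleGraph V}

def edgeSqDiff (f : V → ℝ) : Sym2 V → ℝ :=
  Sym2.lift ⟨fun u v => (f u - f v) ^ 2, fun u v => by ring⟩

@[simp]
lemma edgeSqDiff_mk (f : V → ℝ) (u v : V) : edgeSqDiff f s(u, v) = (f u - f v) ^ 2 := rfl

lemma edgeSqDiff_nonneg (f : V → ℝ) (e : Sym2 V) : 0 ≤ edgeSqDiff f e := by
  induction e with
  | _ u v => exact sq_nonneg _

lemma sum_map_edgeSqDiff_nonneg (f : V → ℝ) (l : List (Sym2 V)) :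
    0 ≤ (l.map (edgeSqDiff f)).sum :=
  List.sum_nonneg (List.forall_mem_map.mpr fun e _ => edgeSqDiff_nonneg f e)

lemma finite_edgeSet_inter_support_edgeSqDiff [G.LocallyFinite] {f : V → ℝ}
    (hf : (Function.support f).Finite) :
    (G.edgeSet ∩ Function.support (edgeSqDiff f)).Finite := by
  refine (hf.biUnion fun v _ => ((G.neighborSet v).toFinite.image (s(v, ·)))).subset ?_
  rintro ⟨u, v⟩ ⟨huv, hne⟩
  have hne : f u ≠ f v := fun h => hne (by simp [h])
  by_cases hu : f u = 0
  · exact mem_biUnion (x := v) (fun hv => hne (hu.trans hv.symm)) ⟨u, huv.symm, Sym2.eq_swap⟩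
  · exact mem_biUnion (x := u) hu ⟨v, huv, rfl⟩

namespace Walk

lemma exists_walk_exit {S : Set V} {u w : V} (p : G.Walk u w) (hu : u ∈ S) (hw : w ∉ S) :
    ∃ w' ∉ S, ∃ q : G.Walk u w', ∀ x ∈ q.support, x ∈ S ∨ x = w' := by
  induction p with
  | nil => exact absurd hu hw
  | @cons u x w hux p ih =>
    by_cases hx : x ∈ S
    · obtain ⟨w', hw', q, hq⟩ := ih hx hw
      exact ⟨w', hw', cons hux q, by simpa [hu] using hq⟩
    · exact ⟨x, hx, cons hux nil, by simp [hu]⟩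

lemma IsPath.length_le_card {u w : V} {p : G.Walk u w} (hp : p.IsPath)
    {S : Finset V} (hw : w ∉ S) (hS : ∀ x ∈ p.support, x ∈ S ∨ x = w) : p.length ≤ #S := by
  classical
  have hsub : p.support.toFinset ⊆ insert w S := fun x hx => by
    simpa [or_comm] using hS x (List.mem_toFinset.mp hx)
  have := Finset.card_le_card hsub
  rw [List.toFinset_card_of_nodup hp.support_nodup, length_support,
    Finset.card_insert_of_notMem hw] at this
  omega

lemma exists_isPath_exit_length_le (hconn : G.Connected) {S : Finset V} {u w : V} (hu : u ∈ S)
    (hw : w ∉ S) : ∃ w' ∉ S, ∃ p : G.Walk u w', p.IsPath ∧ p.length ≤ #S := by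
  classical
  obtain ⟨w', hw', q, hq⟩ := exists_walk_exit (hconn u w).some (S := S) hu hw
  exact ⟨w', hw', q.bypass, q.bypass_isPath, q.bypass_isPath.length_le_card hw' fun x hx =>
    hq x (q.support_bypass_subset_support hx)⟩

lemma sq_sub_le_length_mul_sum_edgeSqDiff (f : V → ℝ) {u w : V} (p : G.Walk u w) :
    (f u - f w) ^ 2 ≤ p.length * (p.edges.map (edgeSqDiff f)).sum := by
  induction p with
  | nil => simp
  | @cons u x w hux p ih =>
    simp only [length_cons, edges_cons, List.map_cons, List.sum_cons, edgeSqDiff_mk]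
    push_cast
    simpa using add_sq_le_add_one_mul (a := f u - f x) p.length.cast_nonneg
      (sum_map_edgeSqDiff_nonneg f _) ih

lemma IsPath.sum_map_edges_le_finsum {F : Sym2 V → ℝ} (hF : ∀ e, 0 ≤ F e)
    (hfin : (G.edgeSet ∩ Function.support F).Finite) {u w : V} {p : G.Walk u w} (hp : p.IsPath) :
    (p.edges.map F).sum ≤ ∑ᶠ e ∈ G.edgeSet, F e := by
  classical
  rw [← List.sum_toFinset F hp.edges_nodup]
  exact Finset.sum_le_finsum_mem_of_subset (fun e he => p.edges_subset_edgeSet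
    (List.mem_toFinset.mp he)) hfin fun e _ => hF e

end Walk

end SimpleGraph

lemma exists_superlevel_finset_half_sum_sq {V : Type*} {m : V → ℝ} (hm0 : ∀ v, 0 ≤ m v)
    (hfin : (Function.support m).Finite) (hsum : ∑ᶠ v, m v = 1) :
    ∃ v₀, ∃ S : Finset V, v₀ ∈ S ∧ ∑ᶠ v, m v ^ 2 ≤ m v₀ ∧ #S * ((∑ᶠ v, m v ^ 2) / 2) ≤ 1 ∧
      ∀ w ∉ S, m w ≤ (∑ᶠ v, m v ^ 2) / 2 := by
  classical
  set s := hfin.toFinset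
  have hsum' : ∑ v ∈ s, m v = 1 := by rw [← hsum, finsum_eq_sum m hfin]
  rw [finsum_eq_sum_of_support_subset _ (s := s) (by intro v; simp [s])]
  set Q := ∑ v ∈ s, m v ^ 2
  have hQ : 0 ≤ Q := Finset.sum_nonneg fun v _ => sq_nonneg (m v)
  obtain ⟨v₀, hv₀, hQv₀⟩ : ∃ v ∈ s, Q ≤ m v := by
    simpa [hsum'] using Finset.exists_sum_sq_le_mul_sum (Finset.nonempty_of_sum_ne_zero
      (hsum'.trans_ne one_ne_zero)) fun v _ => hm0 v
  refine ⟨v₀, s.filter (Q / 2 ≤ m ·), Finset.mem_filter.mpr ⟨hv₀, by linarith⟩, hQv₀,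
    hsum' ▸ s.card_filter_le_mul_le_sum (fun v _ => hm0 v) _, fun w hw => ?_⟩
  by_contra h
  refine hw (Finset.mem_filter.mpr ⟨?_, by linarith⟩)
  simpa [s] using (by linarith : m w ≠ 0)

open SimpleGraph

theorem stmt_4 {V : Type*} [Infinite V]
    (G : SimpleGraph V) (hconn : G.Connected) (hlf : G.LocallyFinite)
    (m : V → ℝ) (hm0 : ∀ v, 0 ≤ m v)
    (hfin : (Function.support m).Finite)
    (hsum : ∑ᶠ v, m v = 1) :
    (∑ᶠ v, (m v)^2)^3 / 8 ≤
      ∑ᶠ e ∈ G.edgeSet,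
        Sym2.lift ⟨fun u v => (m u - m v)^2, fun u v => by ring⟩ e := by
  set Q := ∑ᶠ v, m v ^ 2
  have hQ : 0 ≤ Q := finsum_nonneg fun v => sq_nonneg (m v)
  obtain ⟨v₀, S, hv₀S, hQv₀, hS, hout⟩ := exists_superlevel_finset_half_sum_sq hm0 hfin hsum
  obtain ⟨w, hw⟩ := Infinite.exists_notMem_finset S
  obtain ⟨w', hw', p, hp, hlen⟩ := Walk.exists_isPath_exit_length_le hconn hv₀S hw
  have hdrop := p.sq_sub_le_length_mul_sum_edgeSqDiff m
  have hE := hp.sum_map_edges_le_finsum (edgeSqDiff_nonneg m)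
    (finite_edgeSet_inter_support_edgeSqDiff hfin)
  set P := (p.edges.map (edgeSqDiff m)).sum
  have hP : 0 ≤ P := sum_map_edgeSqDiff_nonneg m _
  calc Q ^ 3 / 8 = Q / 2 * (Q / 2) ^ 2 := by ring
    _ ≤ Q / 2 * (m v₀ - m w') ^ 2 := by gcongr; linarith [hout w' hw']
    _ ≤ Q / 2 * (p.length * P) := by gcongr
    _ ≤ Q / 2 * (#S * P) := by gcongr
    _ = #S * (Q / 2) * P := by ring
    _ ≤ 1 * P := by gcongr
    _ ≤ ∑ᶠ e ∈ G.edgeSet, edgeSqDiff m e := by simpa using hE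
end
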